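/- In a minimum-length covering strategy S = (W_1,...,W_k) for a tree T, the edge set of each walk W_i decomposes into the edges of a path P(W_i) (each traversed exactly once by robot i) and the edges of a forest F(W_i) (each traversed exactly twice by robot i and by no other robot). -/

import Mathlib

/-!
The bounds come from exchange arguments. If robot `i` crossed an edge twice in the same
direction, running the closed walk between the two crossings backwards would make both crossings
unnecessary. If it crosses `xy` in both directions, the part of its walk between the two
crossings is a closed walk at `x` or `y`, which any other robot visiting that vertex could take
over, again saving two moves. The path comes from a parity argument: in a tree every edge is a
bridge, so the parity of the number of crossings of an edge depends only on the endpoints of the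
walk, and the path between those endpoints crosses each edge at most once.
-/

open Finset

variable {V : Type*}

/-- The list of consecutive steps of a walk given as a list of vertices. -/
def wsteps (W : List V) : List (V × V) := W.zip W.tail

/-- A walk on a graph: a nonempty list of vertices in which consecutive
entries are equal or adjacent. -/
def IsWalk (G : SimpleGraph V) (W : List V) : Prop :=
  W ≠ [] ∧ ∀ p ∈ wsteps W, p.1 = p.2 ∨ G.Adj p.1 p.2

/-- The length of a walk: the number of position-changing moves. -/
def wlen [DecidableEq V] (W : List V) : ℕ :=
  (wsteps W).countP (fun p => decide (p.1 ≠ p.2))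

/-- The number of times a walk traverses the edge `{x, y}` (in either direction). -/
def trav [DecidableEq V] (W : List V) (x y : V) : ℕ :=
  (wsteps W).countP (fun p => decide ((p.1 = x ∧ p.2 = y) ∨ (p.1 = y ∧ p.2 = x)))

/-- The number of times a walk traverses the edge `(x, y)` from `x` to `y`. -/
def dirTrav [DecidableEq V] (W : List V) (x y : V) : ℕ :=
  (wsteps W).countP (fun p => decide (p.1 = x ∧ p.2 = y))

/-- A tuple of walks covers the graph: every vertex appears in some walk. -/
def Covers {k : ℕ} (S : Fin k → List V) : Prop := ∀ v : V, ∃ i, v ∈ S i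

/-- The total length of a strategy: the sum of the lengths of the walks. -/
def slen [DecidableEq V] {k : ℕ} (S : Fin k → List V) : ℕ := ∑ i, wlen (S i)

/-- A minimum-length covering strategy: a tuple of walks covering all vertices whose
total length is no larger than that of any covering strategy with the same starts. -/
def IsMinCover [DecidableEq V] (G : SimpleGraph V) {k : ℕ} (S : Fin k → List V) : Prop :=
  (∀ i, IsWalk G (S i)) ∧ Covers S ∧
    ∀ S' : Fin k → List V, (∀ i, IsWalk G (S' i)) → Covers S' →
      (∀ i, (S' i).head? = (S i).head?) → slen S ≤ slen S'

open SimpleGraph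

@[simp] lemma wsteps_cons_cons (a b : V) (l : List V) :
    wsteps (a :: b :: l) = (a, b) :: wsteps (b :: l) := rfl

lemma mem_of_mem_wsteps {W : List V} {p : V × V} (h : p ∈ wsteps W) : p.1 ∈ W ∧ p.2 ∈ W :=
  (List.of_mem_zip h).imp id (List.mem_of_mem_tail ·)

lemma mem_wsteps_iff {x y : V} :
    ∀ {W : List V}, (x, y) ∈ wsteps W ↔ ∃ A C, W = A ++ x :: y :: C
  | [] | [_] => by simp [wsteps, List.singleton_eq_append_iff]
  | a :: b :: l => by
    rw [wsteps_cons_cons, List.mem_cons, mem_wsteps_iff]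
    constructor
    · rintro (h | ⟨A, C, h⟩)
      · obtain ⟨rfl, rfl⟩ := Prod.mk.inj h
        exact ⟨[], l, rfl⟩
      · exact ⟨a :: A, C, by rw [h, List.cons_append]⟩
    · rintro ⟨_ | ⟨a', A⟩, C, h⟩
      · simp_all
      · simp only [List.cons_append, List.cons.injEq] at h
        exact Or.inr ⟨A, C, h.2⟩

lemma exists_eq_append_of_mem_wsteps_cons {u v : V} {l : List V}
    (h : (v, u) ∈ wsteps (v :: l)) : ∃ M C, l = M ++ u :: C ∧ (v :: M).getLast? = some v := by
  obtain ⟨_ | ⟨c, A⟩, C, hl⟩ := mem_wsteps_iff.mp h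
  · exact ⟨[], C, by simpa using hl, rfl⟩
  · simp only [List.cons_append, List.cons.injEq] at hl
    exact ⟨A ++ [v], C, by simp [hl.2], by rw [← List.cons_append, List.getLast?_concat]⟩

lemma exists_eq_append_of_mem_wsteps_of_mem_wsteps {x y : V} (hxy : x ≠ y) :
    ∀ {W : List V}, (x, y) ∈ wsteps W → (y, x) ∈ wsteps W →
      ∃ u v, s(u, v) = s(x, y) ∧
        ∃ A M C, W = A ++ u :: v :: (M ++ u :: C) ∧ (v :: M).getLast? = some v
  | [], h, _ | [_], h, _ => by simp [wsteps] at h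
  | a :: b :: l, h₁, h₂ => by
    simp only [wsteps_cons_cons, List.mem_cons, Prod.mk.injEq] at h₁ h₂
    rcases h₁ with ⟨rfl, rfl⟩ | h₁
    · obtain ⟨M, C, rfl, hM⟩ :=
        exists_eq_append_of_mem_wsteps_cons (h₂.resolve_left fun h => hxy h.2)
      exact ⟨x, y, rfl, [], M, C, rfl, hM⟩
    rcases h₂ with ⟨rfl, rfl⟩ | h₂
    · obtain ⟨M, C, rfl, hM⟩ := exists_eq_append_of_mem_wsteps_cons h₁
      exact ⟨y, x, Sym2.eq_swap, [], M, C, rfl, hM⟩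
    obtain ⟨u, v, huv, A, M, C, hl, hM⟩ :=
      exists_eq_append_of_mem_wsteps_of_mem_wsteps hxy h₁ h₂
    exact ⟨u, v, huv, a :: A, M, C, by rw [hl]; rfl, hM⟩

lemma isWalk_cons_cons {G : SimpleGraph V} {a b : V} {l : List V} :
    IsWalk G (a :: b :: l) ↔ (a = b ∨ G.Adj a b) ∧ IsWalk G (b :: l) := by
  simp [IsWalk]

def stepEdges (W : List V) : Multiset (Sym2 V) :=
  ((wsteps W).map fun p => s(p.1, p.2) : List (Sym2 V))

@[simp] lemma stepEdges_singleton (a : V) : stepEdges [a] = 0 := rfl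

@[simp] lemma stepEdges_cons_cons (a b : V) (l : List V) :
    stepEdges (a :: b :: l) = s(a, b) ::ₘ stepEdges (b :: l) := rfl

lemma stepEdges_append_singleton_append (N : List V) (v : V) (D : List V) :
    stepEdges (N ++ v :: D) = stepEdges (N ++ [v]) + stepEdges (v :: D) := by
  induction N with
  | nil => simp
  | cons a N ih =>
    cases N with
    | nil => simp
    | cons b N => simpa [Multiset.cons_add] using ih

lemma stepEdges_append_of_getLast? {L : List V} {v : V} (hL : L.getLast? = some v)
    (D : List V) : stepEdges (L ++ D) = stepEdges L + stepEdges (v :: D) := by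
  obtain ⟨N, rfl⟩ := List.getLast?_eq_some_iff.mp hL
  rw [List.append_assoc, List.singleton_append, stepEdges_append_singleton_append]

lemma stepEdges_reverse : ∀ W : List V, stepEdges W.reverse = stepEdges W
  | [] | [_] => rfl
  | a :: b :: l => by
    have hlast : (b :: l).reverse.getLast? = some b := by simp
    rw [List.reverse_cons, stepEdges_append_of_getLast? hlast, stepEdges_reverse,
      stepEdges_cons_cons, stepEdges_cons_cons, stepEdges_singleton, Sym2.eq_swap,
      ← Multiset.singleton_add, add_comm]
    rfl

lemma stepEdges_support {G : SimpleGraph V} {u w : V} :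
    ∀ p : G.Walk u w, stepEdges p.support = (p.edges : Multiset (Sym2 V))
  | .nil => rfl
  | .cons _ p => by
    rw [Walk.support_cons, ← p.cons_tail_support, stepEdges_cons_cons, p.cons_tail_support,
      stepEdges_support p, Walk.edges_cons, Multiset.cons_coe]

lemma mem_of_mem_stepEdges {W : List V} {e : Sym2 V} (he : e ∈ stepEdges W) {v : V}
    (hv : v ∈ e) : v ∈ W := by
  obtain ⟨p, hp, rfl⟩ := List.mem_map.mp (Multiset.mem_coe.mp he)
  rcases Sym2.mem_iff.mp hv with rfl | rfl
  exacts [(mem_of_mem_wsteps hp).1, (mem_of_mem_wsteps hp).2]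

lemma isWalk_iff_stepEdges {G : SimpleGraph V} {W : List V} :
    IsWalk G W ↔ W ≠ [] ∧ ∀ e ∈ stepEdges W, e.IsDiag ∨ e ∈ G.edgeSet := by
  simp only [IsWalk, stepEdges, Multiset.mem_coe, List.forall_mem_map, Sym2.mk_isDiag_iff,
    mem_edgeSet]

lemma isWalk_of_stepEdges_le {G : SimpleGraph V} {W : List V} (hW : W ≠ [])
    {s : Multiset (Sym2 V)} (hle : stepEdges W ≤ s)
    (hs : ∀ e ∈ s, e.IsDiag ∨ e ∈ G.edgeSet) : IsWalk G W :=
  isWalk_iff_stepEdges.mpr ⟨hW, fun e he => hs e (Multiset.mem_of_le hle he)⟩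

section DecidableEq

variable [DecidableEq V]

lemma wlen_eq_countP (W : List V) : wlen W = (stepEdges W).countP (fun e => ¬ e.IsDiag) := by
  simp [wlen, stepEdges, List.countP_map, Function.comp_def]

lemma countP_not_isDiag_pair {x y : V} (hxy : x ≠ y) :
    ({s(x, y), s(x, y)} : Multiset (Sym2 V)).countP (fun e => ¬ e.IsDiag) = 2 := by
  rw [Multiset.insert_eq_cons, ← Multiset.cons_zero, Multiset.countP_cons, Multiset.countP_cons]
  simp [hxy]

lemma trav_eq_count (W : List V) (x y : V) : trav W x y = (stepEdges W).count s(x, y) := by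
  simp only [trav, stepEdges, Multiset.coe_count, List.count, List.countP_map]
  exact List.countP_congr fun p _ => by simp [Prod.ext_iff]

lemma dirTrav_eq_count (W : List V) (x y : V) : dirTrav W x y = (wsteps W).count (x, y) :=
  List.countP_congr fun p _ => by simp [Prod.ext_iff]

lemma trav_eq_dirTrav_add_dirTrav (W : List V) {x y : V} (hxy : x ≠ y) :
    trav W x y = dirTrav W x y + dirTrav W y x := by
  unfold trav dirTrav
  induction wsteps W with
  | nil => rfl
  | cons p l ih =>
    simp only [List.countP_cons, ih]
    by_cases h₁ : p.1 = x <;> by_cases h₂ : p.2 = y <;> by_cases h₃ : p.1 = y <;>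
      by_cases h₄ : p.2 = x <;> simp_all <;> omega

lemma exists_eq_append_of_two_le_dirTrav {x y : V} (hxy : x ≠ y) :
    ∀ {W : List V}, 2 ≤ dirTrav W x y → ∃ A M C, W = A ++ x :: y :: (M ++ x :: y :: C)
  | [], h | [_], h => by simp [dirTrav_eq_count, wsteps] at h
  | a :: b :: l, h => by
    rw [dirTrav_eq_count, wsteps_cons_cons, List.count_cons] at h
    by_cases hab : (a, b) = (x, y)
    · obtain ⟨rfl, rfl⟩ := Prod.mk.inj hab
      simp only [beq_self_eq_true, if_true] at h
      have hmem : (a, b) ∈ wsteps (b :: l) := List.count_pos_iff.mp (by omega)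
      obtain ⟨_ | ⟨c, M⟩, C, hl⟩ := mem_wsteps_iff.mp hmem
      · exact absurd (List.cons.inj hl).1 hxy.symm
      · simp only [List.cons_append, List.cons.injEq] at hl
        exact ⟨[], M, C, by rw [hl.2]; rfl⟩
    · have h' : 2 ≤ dirTrav (b :: l) x y := by
        rw [dirTrav_eq_count]
        rwa [if_neg (by simpa using hab), add_zero] at h
      obtain ⟨A, M, C, hl⟩ := exists_eq_append_of_two_le_dirTrav hxy h'
      exact ⟨a :: A, M, C, by rw [hl]; rfl⟩

lemma even_trav_iff_reachable {G : SimpleGraph V} {x y : V}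
    (hb : ¬ (G.deleteEdges {s(x, y)}).Reachable x y) :
    ∀ {W : List V} (hW : IsWalk G W), Even (trav W x y) ↔
      ((G.deleteEdges {s(x, y)}).Reachable x (W.head hW.1) ↔
        (G.deleteEdges {s(x, y)}).Reachable x (W.getLast hW.1))
  | [], hW => absurd rfl hW.1
  | [_], _ => by simp [trav_eq_count]
  | a :: b :: l, hW => by
    obtain ⟨hab, hW'⟩ := isWalk_cons_cons.mp hW
    have ih := even_trav_iff_reachable hb hW'
    simp only [List.head_cons, List.getLast_cons_cons] at ih ⊢
    rw [trav_eq_count, stepEdges_cons_cons, Multiset.count_cons, ← trav_eq_count]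
    set D := G.deleteEdges {s(x, y)}
    by_cases he : s(x, y) = s(a, b)
    · have hflip : D.Reachable x a ↔ ¬ D.Reachable x b := by
        rcases Sym2.eq_iff.mp he with ⟨rfl, rfl⟩ | ⟨rfl, rfl⟩
        · exact iff_of_true (.refl _) hb
        · exact iff_of_false hb (not_not_intro (.refl _))
      rw [if_pos he, Nat.even_add_one, ih, hflip]
      tauto
    · have hkeep : D.Reachable x a ↔ D.Reachable x b := by
        rcases hab with rfl | hab
        · rfl
        · have hD : D.Adj a b := by
            simp only [D, deleteEdges_adj, Set.mem_singleton_iff]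
            exact ⟨hab, Ne.symm he⟩
          exact ⟨fun h => h.trans hD.reachable, fun h => h.trans hD.symm.reachable⟩
      rw [if_neg he, add_zero, ih, hkeep]

lemma SimpleGraph.IsAcyclic.even_trav_iff {G : SimpleGraph V} (hG : G.IsAcyclic)
    {W W' : List V} (hW : IsWalk G W) (hW' : IsWalk G W') (hhead : W.head hW.1 = W'.head hW'.1)
    (hlast : W.getLast hW.1 = W'.getLast hW'.1) {x y : V} (hxy : G.Adj x y) :
    Even (trav W x y) ↔ Even (trav W' x y) := by
  have hb := isBridge_iff.mp (isAcyclic_iff_forall_adj_isBridge.mp hG hxy)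
  rw [even_trav_iff_reachable hb hW, even_trav_iff_reachable hb hW', hhead, hlast]

lemma SimpleGraph.IsTree.exists_path_trav_eq_one_iff {G : SimpleGraph V} (hT : G.IsTree)
    {W : List V} (hW : IsWalk G W) (hW₂ : ∀ x y : V, G.Adj x y → trav W x y ≤ 2) :
    ∃ P : List V, P.Nodup ∧ P.IsChain G.Adj ∧ P.head? = W.head? ∧
      ∀ x y : V, G.Adj x y → (trav W x y = 1 ↔ trav P x y = 1) := by
  obtain ⟨p, hp⟩ := (hT.connected.preconnected (W.head hW.1) (W.getLast hW.1)).exists_isPath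
  have hP : IsWalk G p.support := isWalk_iff_stepEdges.mpr ⟨p.support_ne_nil,
    fun e he => Or.inr (p.edges_subset_edgeSet (by simpa [stepEdges_support] using he))⟩
  refine ⟨p.support, hp.support_nodup, p.isChain_adj_support, ?_, fun x y hxy => ?_⟩
  · rw [List.head?_eq_some_head hP.1, List.head?_eq_some_head hW.1, p.head_support]
  have hpar := hT.isAcyclic.even_trav_iff hW hP p.head_support.symm p.getLast_support.symm hxy
  have hP₁ : trav p.support x y ≤ 1 := by
    rw [trav_eq_count, stepEdges_support, Multiset.coe_count]
    exact List.nodup_iff_count_le_one.mp hp.isTrail.edges_nodup _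
  have := hW₂ x y hxy
  rw [Nat.even_iff, Nat.even_iff] at hpar
  omega

section MinCover

variable {G : SimpleGraph V} {k : ℕ} {S : Fin k → List V}

lemma slen_update (S : Fin k → List V) (i : Fin k) (W : List V) :
    slen (Function.update S i W) + wlen (S i) = slen S + wlen W := by
  unfold slen
  rw [Finset.sum_congr rfl fun m _ => Function.apply_update (fun _ => wlen) S i W m,
    Finset.sum_update_of_mem (mem_univ i), ← Finset.add_sum_erase _ _ (mem_univ i),
    Finset.sdiff_singleton_eq_erase]
  omega

lemma IsMinCover.wlen_le (hS : IsMinCover G S) (i : Fin k) {W : List V} (hW : IsWalk G W)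
    (hhead : W.head? = (S i).head?) (hcov : ∀ v ∈ S i, v ∈ W) : wlen (S i) ≤ wlen W := by
  have hmin := hS.2.2 (Function.update S i W)
    ((Function.forall_update_iff S fun _ W => IsWalk G W).mpr ⟨hW, fun m _ => hS.1 m⟩)
    (fun v => ?_)
    ((Function.forall_update_iff S fun m W => W.head? = (S m).head?).mpr
      ⟨hhead, fun _ _ => rfl⟩)
  · have := slen_update S i W
    omega
  · obtain ⟨m, hm⟩ := hS.2.1 v
    refine (Function.exists_update_iff S fun _ W => v ∈ W).mpr ?_
    by_cases hmi : m = i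
    · exact Or.inl (hcov v (hmi ▸ hm))
    · exact Or.inr ⟨m, hmi, hm⟩

lemma IsMinCover.wlen_add_wlen_le (hS : IsMinCover G S) {i j : Fin k} (hij : i ≠ j)
    {Wi Wj : List V} (hWi : IsWalk G Wi) (hWj : IsWalk G Wj) (hi : Wi.head? = (S i).head?)
    (hj : Wj.head? = (S j).head?) (hcov : ∀ v ∈ S i ++ S j, v ∈ Wi ∨ v ∈ Wj) :
    wlen (S i) + wlen (S j) ≤ wlen Wi + wlen Wj := by
  set S' := Function.update (Function.update S i Wi) j Wj
  have hS' : ∀ m, S' m = if m = j then Wj else if m = i then Wi else S m := fun m => by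
    simp only [S', Function.update_apply]
  have hmin := hS.2.2 S' (fun m => ?_) (fun v => ?_) (fun m => ?_)
  · have h₁ : slen S' + wlen (S j) = slen (Function.update S i Wi) + wlen Wj := by
      rw [← Function.update_of_ne hij.symm Wi S]
      exact slen_update _ j Wj
    have h₂ := slen_update S i Wi
    omega
  · rw [hS']
    split_ifs
    exacts [hWj, hWi, hS.1 m]
  · obtain ⟨m, hm⟩ := hS.2.1 v
    by_cases hmij : m = i ∨ m = j
    · have hv : v ∈ S i ++ S j := by rcases hmij with rfl | rfl <;> simp [hm]
      rcases hcov v hv with h | h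
      · exact ⟨i, by rwa [hS', if_neg hij, if_pos rfl]⟩
      · exact ⟨j, by rwa [hS', if_pos rfl]⟩
    · push Not at hmij
      exact ⟨m, by rwa [hS', if_neg hmij.2, if_neg hmij.1]⟩
  · rw [hS']
    split_ifs with h₁ h₂
    exacts [h₁ ▸ hj, h₂ ▸ hi, rfl]

lemma IsMinCover.dirTrav_le_one (hS : IsMinCover G S) (i : Fin k) {x y : V} (hxy : x ≠ y) :
    dirTrav (S i) x y ≤ 1 := by
  by_contra! h
  obtain ⟨A, M, C, hSi⟩ := exists_eq_append_of_two_le_dirTrav hxy h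
  -- run the loop between the two crossings backwards, which makes both crossings redundant
  set W := A ++ x :: (M.reverse ++ y :: C) with hWdef
  have hsteps : stepEdges (S i) = stepEdges W + {s(x, y), s(x, y)} := by
    have hrev : x :: M.reverse ++ [y] = (y :: M ++ [x]).reverse := by simp
    rw [hSi, hWdef, stepEdges_append_singleton_append A x, stepEdges_cons_cons x y,
      ← List.cons_append (as := M), stepEdges_append_singleton_append (y :: M) x (y :: C),
      stepEdges_cons_cons x y, stepEdges_append_singleton_append A x (M.reverse ++ y :: C),
      ← List.cons_append (as := M.reverse),
      stepEdges_append_singleton_append (x :: M.reverse) y C, hrev, stepEdges_reverse]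
    simp only [Multiset.insert_eq_cons, ← Multiset.singleton_add]
    abel
  have hW : IsWalk G W := isWalk_of_stepEdges_le (by simp [W])
    (hsteps ▸ Multiset.le_add_right _ _) (isWalk_iff_stepEdges.mp (hS.1 i)).2
  have hle := hS.wlen_le i hW (by simp [W, hSi, List.head?_append]) fun v hv => by
    simp only [hSi, W, List.mem_append, List.mem_cons, List.mem_reverse] at hv ⊢
    tauto
  have hlen : wlen (S i) = wlen W + 2 := by
    rw [wlen_eq_countP, wlen_eq_countP, hsteps, Multiset.countP_add, countP_not_isDiag_pair hxy]
  omega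

lemma IsMinCover.notMem_of_detour (hS : IsMinCover G S) {i j : Fin k} (hij : i ≠ j) {u v : V}
    (huv : u ≠ v) {A M C : List V} (hSi : S i = A ++ u :: v :: (M ++ u :: C))
    (hM : (v :: M).getLast? = some v) : v ∉ S j := by
  intro hv
  obtain ⟨B, D, hSj⟩ := List.append_of_mem hv
  -- hand the closed detour `v :: M` of robot `i` over to robot `j`
  set Wi := A ++ u :: C with hWi
  set Wj := B ++ v :: (M ++ D) with hWj
  have hsteps : stepEdges (S i) + stepEdges (S j) =
      stepEdges Wi + stepEdges Wj + {s(u, v), s(u, v)} := by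
    rw [hSi, hSj, hWi, hWj, stepEdges_append_singleton_append A u (v :: (M ++ u :: C)),
      stepEdges_cons_cons u v, ← List.cons_append (as := M) (bs := u :: C),
      stepEdges_append_of_getLast? hM, stepEdges_cons_cons v u,
      stepEdges_append_singleton_append B v D, stepEdges_append_singleton_append A u C,
      stepEdges_append_singleton_append B v (M ++ D), ← List.cons_append (as := M) (bs := D),
      stepEdges_append_of_getLast? hM, Sym2.eq_swap (a := v)]
    simp only [Multiset.insert_eq_cons, ← Multiset.singleton_add]
    abel
  have hwalks : ∀ e ∈ stepEdges (S i) + stepEdges (S j), e.IsDiag ∨ e ∈ G.edgeSet := by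
    simp only [Multiset.mem_add]
    rintro e (he | he)
    exacts [(isWalk_iff_stepEdges.mp (hS.1 i)).2 e he, (isWalk_iff_stepEdges.mp (hS.1 j)).2 e he]
  have hWi : IsWalk G Wi := isWalk_of_stepEdges_le (by simp [Wi])
    (hsteps ▸ (Multiset.le_add_right _ _).trans (Multiset.le_add_right _ _)) hwalks
  have hWj : IsWalk G Wj := isWalk_of_stepEdges_le (by simp [Wj])
    (hsteps ▸ (Multiset.le_add_left _ _).trans (Multiset.le_add_right _ _)) hwalks
  have hle := hS.wlen_add_wlen_le hij hWi hWj (by simp [Wi, hSi, List.head?_append])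
    (by simp [Wj, hSj, List.head?_append]) fun w hw => by
      simp only [hSi, hSj, Wi, Wj, List.mem_append, List.mem_cons] at hw ⊢
      tauto
  have hlen : wlen (S i) + wlen (S j) = wlen Wi + wlen Wj + 2 := by
    simpa only [Multiset.countP_add, ← wlen_eq_countP, countP_not_isDiag_pair huv] using
      congrArg (Multiset.countP fun e => ¬ e.IsDiag) hsteps
  omega

lemma IsMinCover.trav_eq_zero_of_trav_eq_two (hS : IsMinCover G S) {i j : Fin k} (hji : j ≠ i)
    {x y : V} (hxy : x ≠ y) (h₂ : trav (S i) x y = 2) : trav (S j) x y = 0 := by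
  by_contra hj
  have h₁ := hS.dirTrav_le_one i hxy
  have h₁' := hS.dirTrav_le_one i hxy.symm
  rw [trav_eq_dirTrav_add_dirTrav _ hxy] at h₂
  have hmem : ∀ a b, dirTrav (S i) a b = 1 → (a, b) ∈ wsteps (S i) := fun a b h =>
    List.count_pos_iff.mp (by rw [← dirTrav_eq_count, h]; exact one_pos)
  obtain ⟨u, v, huv, A, M, C, hSi, hM⟩ :=
    exists_eq_append_of_mem_wsteps_of_mem_wsteps hxy (hmem x y (by omega)) (hmem y x (by omega))
  have hvS : v ∈ S j := by
    rw [trav_eq_count] at hj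
    exact mem_of_mem_stepEdges (huv ▸ Multiset.count_ne_zero.mp hj) (Sym2.mem_mk_right u v)
  have huv' : u ≠ v := by
    rcases Sym2.eq_iff.mp huv with ⟨rfl, rfl⟩ | ⟨rfl, rfl⟩
    exacts [hxy, hxy.symm]
  exact hS.notMem_of_detour hji.symm huv' hSi hM hvS

end MinCover

end DecidableEq

theorem stmt3_general {V : Type*} [DecidableEq V] (G : SimpleGraph V) (hT : G.IsTree)
    {k : ℕ} (S : Fin k → List V) (hS : IsMinCover G S) :
    ∀ i : Fin k,
      (∀ x y : V, G.Adj x y → trav (S i) x y ≤ 2) ∧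
      (∃ P : List V, P.Nodup ∧ P.Chain' G.Adj ∧ (P.head? = (S i).head?) ∧
        ∀ x y : V, G.Adj x y → (trav (S i) x y = 1 ↔ trav P x y = 1)) ∧
      (∀ x y : V, G.Adj x y → trav (S i) x y = 2 →
        ∀ j : Fin k, j ≠ i → trav (S j) x y = 0) := by
  intro i
  have htwo : ∀ x y : V, G.Adj x y → trav (S i) x y ≤ 2 := fun x y hxy => by
    rw [trav_eq_dirTrav_add_dirTrav _ hxy.ne]
    linarith [hS.dirTrav_le_one i hxy.ne, hS.dirTrav_le_one i hxy.ne.symm]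
  exact ⟨htwo, hT.exists_path_trav_eq_one_iff (hS.1 i) htwo,
    fun x y hxy h₂ j hji => hS.trav_eq_zero_of_trav_eq_two hji hxy.ne h₂⟩

/-- Structure lemma (parts (a),(b)): in a minimum-length covering strategy for a tree,
each edge used by robot i is traversed once or twice by it; the once-traversed edges
form a path; and each twice-traversed edge of robot i is traversed by no other robot. -/
theorem stmt3 {V : Type*} [Fintype V] [DecidableEq V] (G : SimpleGraph V) (hT : G.IsTree)
    {k : ℕ} (S : Fin k → List V) (hS : IsMinCover G S) :
    ∀ i : Fin k,
      (∀ x y : V, G.Adj x y → trav (S i) x y ≤ 2) ∧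
      (∃ P : List V, P.Nodup ∧ P.Chain' G.Adj ∧ (P.head? = (S i).head?) ∧
        ∀ x y : V, G.Adj x y → (trav (S i) x y = 1 ↔ trav P x y = 1)) ∧
      (∀ x y : V, G.Adj x y → trav (S i) x y = 2 →
        ∀ j : Fin k, j ≠ i → trav (S j) x y = 0) :=
  stmt3_general G hT S hS
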